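/- Let p, q > 0. There exists a constant c′ > 0, depending only on p and q, such that for every 𝔷 = (x,y,z) ∈ ℝ³ with x ≠ 0 and y ≠ 0: d_Sol(o, 𝔷) ≤ c′ + |log|x|/p + log|y|/q| + min{ |log|x|/p| + |log|y|/q + z| , |log|x|/p − z| + |log|y|/q| }. -/

import Mathlib

open Real MeasureTheory

/-- A path `γ` is piecewise `C¹` on `[0,1]` if it is continuous there and there is a
finite partition `0 = t₀ < t₁ < ⋯ < tₙ = 1` such that `γ` is `C¹` on each subinterval. -/
def PiecewiseC1 {E : Type*} [NormedAddCommGroup E] [NormedSpace ℝ E] (γ : ℝ → E) : Prop :=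
  ContinuousOn γ (Set.Icc 0 1) ∧
  ∃ (n : ℕ) (t : ℕ → ℝ), t 0 = 0 ∧ t n = 1 ∧ (∀ i < n, t i < t (i + 1)) ∧
    ∀ i < n, ContDiffOn ℝ 1 γ (Set.Icc (t i) (t (i + 1)))

/-- The `Sol(p,q)`-length of a path in `ℝ³`. -/
noncomputable def solLength (p q : ℝ) (γ : ℝ → ℝ × ℝ × ℝ) : ℝ :=
  ∫ t in (0:ℝ)..1,
    Real.sqrt (Real.exp (-(2*p*(γ t).2.2)) * (deriv (fun s => (γ s).1) t)^2
      + Real.exp (2*q*(γ t).2.2) * (deriv (fun s => (γ s).2.1) t)^2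
      + (deriv (fun s => (γ s).2.2) t)^2)

/-- The `Sol(p,q)` distance: infimum of lengths of piecewise `C¹` paths joining the points. -/
noncomputable def solDist (p q : ℝ) (u v : ℝ × ℝ × ℝ) : ℝ :=
  ⨅ γ : {γ : ℝ → ℝ × ℝ × ℝ // γ 0 = u ∧ γ 1 = v ∧ PiecewiseC1 γ}, solLength p q γ.1

/-!
Join `o` to `(x, y, z)` by five axis-parallel segments. Put `a = log |x| / p` and
`b = log |y| / q`. At height `a` the `x`-direction is scaled by `e^{-pa} = 1 / |x|`, so moving
horizontally from `x = 0` to `x` costs exactly `1`; likewise at height `-b` the move to `y`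
costs `1`. Going up to `a`, across in `x`, to `-b`, across in `y`, then to `z` costs
`2 + |a| + |a + b| + |b + z|`; doing `y` first costs `2 + |b| + |a + b| + |a - z|`.
So `c' = 2` works.
-/

open Set

theorem continuousOn_Icc_of_continuousOn_Icc_succ {α β : Type*} [LinearOrder α]
    [TopologicalSpace α] [OrderClosedTopology α] [TopologicalSpace β] {f : α → β} {t : ℕ → α}
    {n : ℕ} (hf : ∀ i < n, ContinuousOn f (Icc (t i) (t (i + 1)))) :
    ContinuousOn f (Icc (t 0) (t n)) := by
  induction n with
  | zero => simp
  | succ n ih =>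
    exact ((ih fun i hi => hf i (by omega)).union_of_isClosed (hf n n.lt_succ_self)
      isClosed_Icc isClosed_Icc).mono Icc_subset_Icc_union_Icc

theorem intervalIntegrable_of_eqOn_Ioo {F : Type*} [NormedAddCommGroup F] {f : ℝ → F}
    {a b : ℝ} {c : F} (hab : a ≤ b) (hf : EqOn f (fun _ => c) (Ioo a b)) :
    IntervalIntegrable f volume a b := by
  rw [intervalIntegrable_iff_integrableOn_Ioo_of_le hab]
  exact (integrableOn_congr_fun hf measurableSet_Ioo).mpr
    (integrableOn_const measure_Ioo_lt_top.ne)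

variable {E : Type*} [NormedAddCommGroup E] [NormedSpace ℝ E]

theorem intervalIntegral.integral_eq_smul_of_eqOn_Ioo [CompleteSpace E] {f : ℝ → E} {a b : ℝ}
    {c : E} (hab : a ≤ b) (hf : EqOn f (fun _ => c) (Ioo a b)) :
    ∫ t in a..b, f t = (b - a) • c := by
  rw [intervalIntegral.integral_of_le hab, integral_Ioc_eq_integral_Ioo,
    setIntegral_congr_fun measurableSet_Ioo hf, setIntegral_const, Real.volume_real_Ioo_of_le hab]

theorem intervalIntegral.integral_eq_sum_of_eqOn_Ioo [CompleteSpace E] {f : ℝ → E} {a : ℕ → ℝ}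
    {c : ℕ → E} {n : ℕ} (ha : ∀ i < n, a i ≤ a (i + 1))
    (hf : ∀ i < n, EqOn f (fun _ => c i) (Ioo (a i) (a (i + 1)))) :
    ∫ t in a 0..a n, f t = ∑ i ∈ Finset.range n, (a (i + 1) - a i) • c i := by
  rw [← intervalIntegral.sum_integral_adjacent_intervals
    fun i hi => intervalIntegrable_of_eqOn_Ioo (ha i hi) (hf i hi)]
  exact Finset.sum_congr rfl fun i hi =>
    integral_eq_smul_of_eqOn_Ioo (ha i (Finset.mem_range.mp hi)) (hf i (Finset.mem_range.mp hi))

theorem PiecewiseC1.of_contDiffOn {γ : ℝ → E} {n : ℕ} {t : ℕ → ℝ} (h0 : t 0 = 0) (h1 : t n = 1)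
    (ht : ∀ i < n, t i < t (i + 1)) (hγ : ∀ i < n, ContDiffOn ℝ 1 γ (Icc (t i) (t (i + 1)))) :
    PiecewiseC1 γ :=
  ⟨h0 ▸ h1 ▸ continuousOn_Icc_of_continuousOn_Icc_succ fun i hi => (hγ i hi).continuousOn,
    n, t, h0, h1, ht, hγ⟩

/-- The polygon through `v 0, …, v n`, run through at constant speed on each `[i / n, (i + 1) / n]`.
Clamping the segment index at `n - 1` puts `t = 1` on the last segment. -/
noncomputable def polygonal (n : ℕ) (v : ℕ → E) (t : ℝ) : E :=
  let i := min ⌊n * t⌋₊ (n - 1)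
  v i + (n * t - i) • (v (i + 1) - v i)

section Polygonal

variable {n : ℕ} (v : ℕ → E)

theorem polygonal_eqOn {i : ℕ} (hi : i < n) :
    EqOn (polygonal n v) (fun t => v i + (n * t - i) • (v (i + 1) - v i))
      (Icc (i / n) ((i + 1) / n)) := by
  intro t ⟨hlo, hhi⟩
  have hn : (0 : ℝ) < n := by exact_mod_cast (Nat.zero_le i).trans_lt hi
  rw [div_le_iff₀' hn] at hlo
  rw [le_div_iff₀' hn] at hhi
  dsimp only [polygonal]
  rcases hhi.lt_or_eq with hlt | heq
  · have hfl : ⌊n * t⌋₊ = i := (Nat.floor_eq_iff (hlo.trans' i.cast_nonneg)).mpr ⟨hlo, hlt⟩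
    rw [hfl, min_eq_left (Nat.le_sub_one_of_lt hi)]
  · have hfl : ⌊n * t⌋₊ = i + 1 := by rw [heq]; exact_mod_cast Nat.floor_natCast (i + 1)
    rw [hfl, heq]
    rcases Nat.lt_or_eq_of_le (Nat.succ_le_of_lt hi) with hlt' | heq'
    · rw [min_eq_left (Nat.le_sub_one_of_lt hlt')]
      simp
    · rw [show min (i + 1) (n - 1) = i by omega]

theorem polygonal_zero (hn : 0 < n) : polygonal n v 0 = v 0 := by
  simpa using polygonal_eqOn v hn (x := 0) ⟨by simp, by positivity⟩

theorem polygonal_one (hn : 0 < n) : polygonal n v 1 = v n := by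
  have hn' : (n : ℝ) ≠ 0 := by positivity
  have h := polygonal_eqOn v (Nat.sub_one_lt_of_lt hn)
    (x := 1) ⟨by rw [div_le_one₀ (by positivity)]; simp, by field_simp; simp [Nat.cast_sub hn]⟩
  rw [h, Nat.sub_add_cancel hn, Nat.cast_sub hn]
  simp

theorem contDiffOn_polygonal {i : ℕ} (hi : i < n) :
    ContDiffOn ℝ 1 (polygonal n v) (Icc (i / n) ((i + 1) / n)) :=
  (by fun_prop : ContDiff ℝ 1 fun t : ℝ => v i + (n * t - i) • (v (i + 1) - v i)).contDiffOn.congr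
    (polygonal_eqOn v hi)

theorem hasDerivAt_polygonal {i : ℕ} (hi : i < n) {t : ℝ}
    (ht : t ∈ Ioo ((i : ℝ) / n) ((i + 1) / n)) :
    HasDerivAt (polygonal n v) ((n : ℝ) • (v (i + 1) - v i)) t := by
  have hline : HasDerivAt (fun t : ℝ => v i + (n * t - i) • (v (i + 1) - v i))
      ((n : ℝ) • (v (i + 1) - v i)) t := by
    simpa using (((hasDerivAt_id t).const_mul (n : ℝ)).sub_const (i : ℝ)).smul_const
      (v (i + 1) - v i) |>.const_add (v i)
  exact hline.congr_of_eventuallyEq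
    (Filter.eventuallyEq_of_mem (Icc_mem_nhds ht.1 ht.2) (polygonal_eqOn v hi))

theorem piecewiseC1_polygonal (hn : 0 < n) : PiecewiseC1 (polygonal n v) := by
  have hn' : (0 : ℝ) < n := by exact_mod_cast hn
  refine PiecewiseC1.of_contDiffOn (t := fun i => (i : ℝ) / n) (by simp) (div_self hn'.ne')
    (fun i _ => by gcongr; simp) (fun i hi => by simpa using contDiffOn_polygonal v hi)

end Polygonal

noncomputable def solSpeed (p q z : ℝ) (w : ℝ × ℝ × ℝ) : ℝ :=
  √(exp (-(2 * p * z)) * w.1 ^ 2 + exp (2 * q * z) * w.2.1 ^ 2 + w.2.2 ^ 2)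

def HorizontalOrVertical (w : ℝ × ℝ × ℝ) : Prop :=
  w.2.2 = 0 ∨ w.1 = 0 ∧ w.2.1 = 0

section SolSpeed

variable (p q z : ℝ)

theorem solSpeed_smul (c : ℝ) (w : ℝ × ℝ × ℝ) :
    solSpeed p q z (c • w) = |c| * solSpeed p q z w := by
  rw [solSpeed, solSpeed, ← Real.sqrt_sq_eq_abs, ← Real.sqrt_mul (sq_nonneg c)]
  congr 1
  simp only [Prod.smul_fst, Prod.smul_snd, smul_eq_mul]
  ring

theorem solSpeed_of_vertical {w : ℝ × ℝ × ℝ} (h1 : w.1 = 0) (h2 : w.2.1 = 0) :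
    solSpeed p q z w = |w.2.2| := by
  simp [solSpeed, h1, h2, Real.sqrt_sq_eq_abs]

theorem solSpeed_fst (u : ℝ) : solSpeed p q z (u, 0, 0) = exp (-(p * z)) * |u| := by
  have h : exp (-(2 * p * z)) * u ^ 2 = (exp (-(p * z)) * u) ^ 2 := by
    rw [mul_pow, ← exp_nat_mul]; ring_nf
  simp [solSpeed, h, Real.sqrt_sq_eq_abs, abs_mul]

theorem solSpeed_snd (u : ℝ) : solSpeed p q z (0, u, 0) = exp (q * z) * |u| := by
  have h : exp (2 * q * z) * u ^ 2 = (exp (q * z) * u) ^ 2 := by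
    rw [mul_pow, ← exp_nat_mul]; ring_nf
  simp [solSpeed, h, Real.sqrt_sq_eq_abs, abs_mul]

end SolSpeed

theorem solSpeed_fst_log_abs (q : ℝ) {p x : ℝ} (hp : p ≠ 0) (hx : x ≠ 0) :
    solSpeed p q (log |x| / p) (x, 0, 0) = 1 := by
  rw [solSpeed_fst, mul_div_cancel₀ _ hp, exp_neg, exp_log (abs_pos.mpr hx),
    inv_mul_cancel₀ (abs_ne_zero.mpr hx)]

theorem solSpeed_snd_neg_log_abs (p : ℝ) {q y : ℝ} (hq : q ≠ 0) (hy : y ≠ 0) :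
    solSpeed p q (-(log |y| / q)) (0, y, 0) = 1 := by
  rw [solSpeed_snd, mul_neg, mul_div_cancel₀ _ hq, exp_neg, exp_log (abs_pos.mpr hy),
    inv_mul_cancel₀ (abs_ne_zero.mpr hy)]

theorem solLength_nonneg (p q : ℝ) (γ : ℝ → ℝ × ℝ × ℝ) : 0 ≤ solLength p q γ :=
  intervalIntegral.integral_nonneg zero_le_one fun _ _ => Real.sqrt_nonneg _

theorem solDist_le_solLength (p q : ℝ) {γ : ℝ → ℝ × ℝ × ℝ} (hγ : PiecewiseC1 γ) :
    solDist p q (γ 0) (γ 1) ≤ solLength p q γ := by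
  refine ciInf_le (f := fun γ' : {γ' // γ' 0 = γ 0 ∧ γ' 1 = γ 1 ∧ PiecewiseC1 γ'} =>
    solLength p q γ'.1) ⟨0, ?_⟩ ⟨γ, rfl, rfl, hγ⟩
  rintro _ ⟨γ', rfl⟩
  exact solLength_nonneg p q γ'.1

section SolPolygon

variable (p q : ℝ) {n : ℕ} (v : ℕ → ℝ × ℝ × ℝ)

theorem deriv_coords_polygonal {i : ℕ} (hi : i < n) {t : ℝ}
    (ht : t ∈ Ioo ((i : ℝ) / n) ((i + 1) / n)) :
    (deriv (fun s => (polygonal n v s).1) t, deriv (fun s => (polygonal n v s).2.1) t,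
      deriv (fun s => (polygonal n v s).2.2) t) = (n : ℝ) • (v (i + 1) - v i) := by
  have hL (L : ℝ × ℝ × ℝ →L[ℝ] ℝ) : deriv (fun s => L (polygonal n v s)) t =
      L ((n : ℝ) • (v (i + 1) - v i)) :=
    (L.hasFDerivAt.comp_hasDerivAt t (hasDerivAt_polygonal v hi ht)).deriv
  have h1 := hL (.fst ℝ ℝ (ℝ × ℝ))
  have h2 := hL ((ContinuousLinearMap.fst ℝ ℝ ℝ).comp (.snd ℝ ℝ (ℝ × ℝ)))
  have h3 := hL ((ContinuousLinearMap.snd ℝ ℝ ℝ).comp (.snd ℝ ℝ (ℝ × ℝ)))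
  simp only [ContinuousLinearMap.coe_fst', ContinuousLinearMap.coe_comp, Function.comp_apply,
    ContinuousLinearMap.coe_snd'] at h1 h2 h3
  rw [h1, h2, h3]

theorem solSpeed_polygonal_height_eq {i : ℕ} (hi : i < n)
    (hv : HorizontalOrVertical (v (i + 1) - v i)) {t : ℝ}
    (ht : t ∈ Icc ((i : ℝ) / n) ((i + 1) / n)) :
    solSpeed p q (polygonal n v t).2.2 (v (i + 1) - v i)
      = solSpeed p q (v i).2.2 (v (i + 1) - v i) := by
  rcases hv with hz | ⟨hx, hy⟩
  · have hheight : (polygonal n v t).2.2 = (v i).2.2 := by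
      rw [polygonal_eqOn v hi ht]
      simp only [Prod.snd_add, Prod.smul_snd, smul_eq_mul, hz, mul_zero, add_zero]
    rw [hheight]
  · rw [solSpeed_of_vertical p q _ hx hy, solSpeed_of_vertical p q _ hx hy]

theorem solLength_polygonal (hn : 0 < n) (hv : ∀ i < n, HorizontalOrVertical (v (i + 1) - v i)) :
    solLength p q (polygonal n v)
      = ∑ i ∈ Finset.range n, solSpeed p q (v i).2.2 (v (i + 1) - v i) := by
  have hn' : (0 : ℝ) < n := by exact_mod_cast hn
  have hpiece : ∀ i < n, EqOn
      (fun t => solSpeed p q (polygonal n v t).2.2 (deriv (fun s => (polygonal n v s).1) t,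
        deriv (fun s => (polygonal n v s).2.1) t, deriv (fun s => (polygonal n v s).2.2) t))
      (fun _ => n * solSpeed p q (v i).2.2 (v (i + 1) - v i))
      (Ioo (((i : ℕ) : ℝ) / n) (((i + 1 : ℕ) : ℝ) / n)) := by
    intro i hi t ht
    rw [Nat.cast_succ] at ht
    dsimp only
    rw [deriv_coords_polygonal v hi ht, solSpeed_smul, abs_of_pos hn',
      solSpeed_polygonal_height_eq p q v hi (hv i hi) (Ioo_subset_Icc_self ht)]
  have hsum := intervalIntegral.integral_eq_sum_of_eqOn_Ioo (a := fun i : ℕ => (i : ℝ) / n)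
    (fun i _ => by gcongr; simp) hpiece
  simp only [Nat.cast_zero, zero_div, div_self hn'.ne'] at hsum
  refine hsum.trans (Finset.sum_congr rfl fun i _ => ?_)
  rw [smul_eq_mul, Nat.cast_succ]
  field_simp
  ring

theorem solDist_le_sum_solSpeed (hn : 0 < n)
    (hv : ∀ i < n, HorizontalOrVertical (v (i + 1) - v i)) :
    solDist p q (v 0) (v n) ≤ ∑ i ∈ Finset.range n, solSpeed p q (v i).2.2 (v (i + 1) - v i) := by
  have h := solDist_le_solLength p q (piecewiseC1_polygonal v hn)
  rwa [polygonal_zero v hn, polygonal_one v hn, solLength_polygonal p q v hn hv] at h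

end SolPolygon

theorem solDist_le_of_x_first {p q x y : ℝ} (hp : p ≠ 0) (hq : q ≠ 0) (hx : x ≠ 0) (hy : y ≠ 0)
    (z : ℝ) :
    solDist p q (0, 0, 0) (x, y, z)
      ≤ 2 + |log |x| / p + log |y| / q| + (|log |x| / p| + |log |y| / q + z|) := by
  have h := solDist_le_sum_solSpeed p q (n := 5) (fun i =>
    [(0, 0, 0), (0, 0, log |x| / p), (x, 0, log |x| / p), (x, 0, -(log |y| / q)),
      (x, y, -(log |y| / q)), (x, y, z)].getD i 0)
    (by norm_num) (by intro i hi; interval_cases i <;> simp [HorizontalOrVertical])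
  simp only [Finset.sum_range_succ, Finset.sum_range_zero, zero_add, List.getD_cons_zero,
    List.getD_cons_succ, Prod.mk_sub_mk, sub_self, sub_zero, solSpeed_of_vertical, neg_sub_left,
    sub_neg_eq_add, abs_neg] at h
  -- `sub_self` has collapsed `(0, a) - (0, a)` to `0 : ℝ × ℝ`
  rw [← Prod.mk_zero_zero, solSpeed_fst_log_abs q hp hx, solSpeed_snd_neg_log_abs p hq hy,
    add_comm z] at h
  linarith

theorem solDist_le_of_y_first {p q x y : ℝ} (hp : p ≠ 0) (hq : q ≠ 0) (hx : x ≠ 0) (hy : y ≠ 0)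
    (z : ℝ) :
    solDist p q (0, 0, 0) (x, y, z)
      ≤ 2 + |log |x| / p + log |y| / q| + (|log |x| / p - z| + |log |y| / q|) := by
  have h := solDist_le_sum_solSpeed p q (n := 5) (fun i =>
    [(0, 0, 0), (0, 0, -(log |y| / q)), (0, y, -(log |y| / q)), (0, y, log |x| / p),
      (x, y, log |x| / p), (x, y, z)].getD i 0)
    (by norm_num) (by intro i hi; interval_cases i <;> simp [HorizontalOrVertical])
  simp only [Finset.sum_range_succ, Finset.sum_range_zero, zero_add, List.getD_cons_zero,
    List.getD_cons_succ, Prod.mk_sub_mk, sub_self, sub_zero, solSpeed_of_vertical,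
    sub_neg_eq_add, abs_neg] at h
  rw [← Prod.mk_zero_zero, solSpeed_fst_log_abs q hp hx, solSpeed_snd_neg_log_abs p hq hy,
    abs_sub_comm z] at h
  linarith

theorem solDist_upper_bound_log (p q : ℝ) (hp : 0 < p) (hq : 0 < q) :
    ∃ c' > (0:ℝ), ∀ x y z : ℝ, x ≠ 0 → y ≠ 0 →
      solDist p q (0, 0, 0) (x, y, z)
        ≤ c' + |Real.log |x| / p + Real.log |y| / q|
          + min (|Real.log |x| / p| + |Real.log |y| / q + z|)
                (|Real.log |x| / p - z| + |Real.log |y| / q|) := by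
  refine ⟨2, two_pos, fun x y z hx hy => ?_⟩
  rw [← min_add_add_left]
  exact le_min (solDist_le_of_x_first hp.ne' hq.ne' hx hy z)
    (solDist_le_of_y_first hp.ne' hq.ne' hx hy z)
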